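/- Let ψ be a modal μ-calculus formula such that □ψ is in normal form, let κ : P → Set S be a valuation and s : S a state. Then Player 0 wins the model-checking parity game G(□ψ) from the vertex (□ψ, s) if and only if for every s' with R s s', Player 0 wins G(ψ) from (ψ, s'). -/

import Mathlib

/-- Formulas of the modal μ-calculus over a type `P` of propositional variables:
`⊥ | ⊤ | p | ¬p | φ∧φ | φ∨φ | □φ | ◇φ | μp.φ | νp.φ`. -/
inductive MuForm (P : Type*) where
  | bot : MuForm P
  | top : MuForm P
  | var (p : P) : MuForm P
  | nvar (p : P) : MuForm P
  | and (φ ψ : MuForm P) : MuForm P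
  | or (φ ψ : MuForm P) : MuForm P
  | box (φ : MuForm P) : MuForm P
  | dia (φ : MuForm P) : MuForm P
  | mu (p : P) (φ : MuForm P) : MuForm P
  | nu (p : P) (φ : MuForm P) : MuForm P
  deriving DecidableEq

variable {P S : Type*}

/-- The set of free variables of a μ-calculus formula (`μp`/`νp` bind `p`). -/
def MuForm.freeVars : MuForm P → Set P
  | .bot => ∅
  | .top => ∅
  | .var p => {p}
  | .nvar p => {p}
  | .and φ ψ => φ.freeVars ∪ ψ.freeVars
  | .or φ ψ => φ.freeVars ∪ ψ.freeVars
  | .box φ => φ.freeVars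
  | .dia φ => φ.freeVars
  | .mu p φ => φ.freeVars \ {p}
  | .nu p φ => φ.freeVars \ {p}

/-- `p` occurs only positively in a μ-calculus formula. -/
def MuForm.PositiveIn (p : P) : MuForm P → Prop
  | .bot => True
  | .top => True
  | .var _ => True
  | .nvar q => q ≠ p
  | .and φ ψ => φ.PositiveIn p ∧ ψ.PositiveIn p
  | .or φ ψ => φ.PositiveIn p ∧ ψ.PositiveIn p
  | .box φ => φ.PositiveIn p
  | .dia φ => φ.PositiveIn p
  | .mu q φ => q = p ∨ φ.PositiveIn p
  | .nu q φ => q = p ∨ φ.PositiveIn p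

/-- Semantics `⟦φ⟧κ ⊆ S` of a μ-calculus formula in the Kripke structure with
state type `S`, transition relation `R`, and valuation `κ : P → Set S`. -/
def MuForm.sem [DecidableEq P] (R : S → S → Prop) : MuForm P → (P → Set S) → Set S
  | .bot, _ => ∅
  | .top, _ => Set.univ
  | .var p, κ => κ p
  | .nvar p, κ => (κ p)ᶜ
  | .and φ ψ, κ => φ.sem R κ ∩ ψ.sem R κ
  | .or φ ψ, κ => φ.sem R κ ∪ ψ.sem R κ
  | .box φ, κ => {s | ∀ s', R s s' → s' ∈ φ.sem R κ}
  | .dia φ, κ => {s | ∃ s', R s s' ∧ s' ∈ φ.sem R κ}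
  | .mu p φ, κ => ⋂₀ {X : Set S | φ.sem R (Function.update κ p X) ⊆ X}
  | .nu p φ, κ => ⋃₀ {X : Set S | X ⊆ φ.sem R (Function.update κ p X)}
variable [DecidableEq P]

/-- The finite set of subformulas of a μ-calculus formula. -/
def MuForm.subformulas : MuForm P → Finset (MuForm P)
  | .bot => {.bot}
  | .top => {.top}
  | .var p => {.var p}
  | .nvar p => {.nvar p}
  | .and φ ψ => insert (.and φ ψ) (φ.subformulas ∪ ψ.subformulas)
  | .or φ ψ => insert (.or φ ψ) (φ.subformulas ∪ ψ.subformulas)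
  | .box φ => insert (.box φ) φ.subformulas
  | .dia φ => insert (.dia φ) φ.subformulas
  | .mu p φ => insert (.mu p φ) φ.subformulas
  | .nu p φ => insert (.nu p φ) φ.subformulas

/-- Size of a formula (used as a termination measure). -/
def MuForm.fsize : MuForm P → ℕ
  | .bot => 1
  | .top => 1
  | .var _ => 1
  | .nvar _ => 1
  | .and φ ψ => φ.fsize + ψ.fsize + 1
  | .or φ ψ => φ.fsize + ψ.fsize + 1
  | .box φ => φ.fsize + 1
  | .dia φ => φ.fsize + 1
  | .mu _ φ => φ.fsize + 1
  | .nu _ φ => φ.fsize + 1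

theorem MuForm.fsize_le_of_mem_subformulas :
    ∀ {φ ψ : MuForm P}, ψ ∈ φ.subformulas → ψ.fsize ≤ φ.fsize := by
  intro φ
  induction φ with
  | bot => intro ψ h; simp [MuForm.subformulas] at h; subst h; exact le_refl _
  | top => intro ψ h; simp [MuForm.subformulas] at h; subst h; exact le_refl _
  | var p => intro ψ h; simp [MuForm.subformulas] at h; subst h; exact le_refl _
  | nvar p => intro ψ h; simp [MuForm.subformulas] at h; subst h; exact le_refl _
  | and φ₁ φ₂ ih₁ ih₂ =>
      intro ψ h; simp [MuForm.subformulas] at h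
      rcases h with h | h | h
      · subst h; exact le_refl _
      · exact le_trans (ih₁ h) (by simp [MuForm.fsize]; omega)
      · exact le_trans (ih₂ h) (by simp [MuForm.fsize]; omega)
  | or φ₁ φ₂ ih₁ ih₂ =>
      intro ψ h; simp [MuForm.subformulas] at h
      rcases h with h | h | h
      · subst h; exact le_refl _
      · exact le_trans (ih₁ h) (by simp [MuForm.fsize]; omega)
      · exact le_trans (ih₂ h) (by simp [MuForm.fsize]; omega)
  | box φ ih =>
      intro ψ h; simp [MuForm.subformulas] at h
      rcases h with h | h
      · subst h; exact le_refl _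
      · exact le_trans (ih h) (by simp [MuForm.fsize])
  | dia φ ih =>
      intro ψ h; simp [MuForm.subformulas] at h
      rcases h with h | h
      · subst h; exact le_refl _
      · exact le_trans (ih h) (by simp [MuForm.fsize])
  | mu p φ ih =>
      intro ψ h; simp [MuForm.subformulas] at h
      rcases h with h | h
      · subst h; exact le_refl _
      · exact le_trans (ih h) (by simp [MuForm.fsize])
  | nu p φ ih =>
      intro ψ h; simp [MuForm.subformulas] at h
      rcases h with h | h
      · subst h; exact le_refl _
      · exact le_trans (ih h) (by simp [MuForm.fsize])

open Classical in
/-- The alternation depth `α(φ)` of a μ-calculus formula.  For `μp.ψ` it is the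
maximum of `{1, α(ψ)}` together with all values `α(νp'.ψ') + 1` for ν-subformulas
`νp'.ψ'` of `ψ` in which `p` occurs free, and dually for `νp.ψ`. -/
noncomputable def MuForm.alt : MuForm P → ℕ
  | .bot => 0
  | .top => 0
  | .var _ => 0
  | .nvar _ => 0
  | .and φ ψ => max φ.alt ψ.alt
  | .or φ ψ => max φ.alt ψ.alt
  | .box φ => φ.alt
  | .dia φ => φ.alt
  | .mu p φ => max (max 1 φ.alt)
      (φ.subformulas.attach.sup fun ψ =>
        if (∃ p' ψ', ψ.1 = MuForm.nu p' ψ') ∧ p ∈ ψ.1.freeVars then ψ.1.alt + 1 else 0)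
  | .nu p φ => max (max 1 φ.alt)
      (φ.subformulas.attach.sup fun ψ =>
        if (∃ p' ψ', ψ.1 = MuForm.mu p' ψ') ∧ p ∈ ψ.1.freeVars then ψ.1.alt + 1 else 0)
termination_by φ => φ.fsize
decreasing_by
  all_goals simp [MuForm.fsize]
  all_goals try omega
  all_goals
    have := MuForm.fsize_le_of_mem_subformulas ψ.2
    omega

/-- A parity game: vertices `V`, each owned by Player `0` or Player `1`,
an edge relation `E`, and a priority function `prio` with finite range. -/
structure ParityGame (V : Type*) where
  owner : V → Fin 2
  E : V → V → Prop
  prio : V → ℕ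
  finRange : (Set.range prio).Finite

namespace ParityGame

variable {V : Type*} (G : ParityGame V)

/-- A dead end: a vertex without `E`-successor. -/
def DeadEnd (v : V) : Prop := ∀ w, ¬ G.E v w

/-- `π : ℕ → V` is an infinite play (all consecutive steps are edges). -/
def InfPlay (π : ℕ → V) : Prop := ∀ i, G.E (π i) (π (i + 1))

/-- The set of priorities occurring infinitely often along an infinite play. -/
def InfOften (π : ℕ → V) : Set ℕ := {c | ∀ N, ∃ n, N ≤ n ∧ G.prio (π n) = c}

/-- An infinite play is won by Player `0` iff the maximum priority occurring
infinitely often is even (max-parity condition). -/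
def WinInf (π : ℕ → V) : Prop := Even (sSup (G.InfOften π))

/-- `l` is a finite play from `v`: a nonempty list starting at `v`, with
consecutive `E`-edges, whose last vertex is a dead end. -/
def FinPlay (v : V) (l : List V) : Prop :=
  l.head? = some v ∧ l.Chain' G.E ∧ ∀ x ∈ l.getLast?, G.DeadEnd x

/-- A finite play is won by Player `0` iff its last vertex belongs to Player `1`. -/
def WinFin (l : List V) : Prop := ∀ x ∈ l.getLast?, G.owner x = 1

/-- A strategy (for Player `0`) is valid if it assigns to every finite nonempty
`E`-path ending in a Player-`0` vertex that is not a dead end an `E`-successor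
of that vertex. -/
def ValidStrat (σ : List V → V) : Prop :=
  ∀ (l : List V) (x : V), l.Chain' G.E → l.getLast? = some x →
    G.owner x = 0 → ¬ G.DeadEnd x → G.E x (σ l)

/-- An infinite play conforms to a strategy `σ` if every step taken from a
Player-`0` vertex follows `σ` applied to the path traversed so far. -/
def ConformsInf (σ : List V → V) (π : ℕ → V) : Prop :=
  ∀ i, G.owner (π i) = 0 → π (i + 1) = σ (List.ofFn fun j : Fin (i + 1) => π j)

/-- A finite play conforms to a strategy `σ` if every step taken from a
Player-`0` vertex follows `σ` applied to the path traversed so far. -/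
def ConformsFin (σ : List V → V) (l : List V) : Prop :=
  ∀ (i : ℕ) (h : i + 1 < l.length),
    G.owner (l.get ⟨i, Nat.lt_of_succ_lt h⟩) = 0 →
    l.get ⟨i + 1, h⟩ = σ (l.take (i + 1))

/-- `σ` is a winning strategy for Player `0` from `v`: it is a valid strategy
and every (infinite or finite) play from `v` conforming to it is won by
Player `0`. -/
def WinningFrom (σ : List V → V) (v : V) : Prop :=
  G.ValidStrat σ ∧
    (∀ π : ℕ → V, π 0 = v → G.InfPlay π → G.ConformsInf σ π → G.WinInf π) ∧
    (∀ l : List V, G.FinPlay v l → G.ConformsFin σ l → G.WinFin l)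

/-- Player `0` wins the game from `v` if some strategy is winning for
Player `0` from `v`. -/
def Wins0 (v : V) : Prop := ∃ σ : List V → V, G.WinningFrom σ v

/-- A strategy is memoryless if its value depends only on the last vertex of
the path. -/
def Memoryless (σ : List V → V) : Prop :=
  ∀ (l l' : List V) (x : V), l.getLast? = some x → l'.getLast? = some x → σ l = σ l'

end ParityGame

theorem MuForm.self_mem_subformulas (φ : MuForm P) : φ ∈ φ.subformulas := by
  cases φ <;> simp [MuForm.subformulas]

/-- `p` is bound in `φ`: some fixpoint subformula of `φ` binds `p`. -/
def MuForm.BoundIn (p : P) (φ : MuForm P) : Prop :=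
  ∃ ψ, MuForm.mu p ψ ∈ φ.subformulas ∨ MuForm.nu p ψ ∈ φ.subformulas

/-- `φ` is in normal form: every variable is bound by at most one fixpoint
operator occurring in `φ` (the fixpoint subformula binding a given variable is
unique), and no variable occurs both free and bound in `φ`. -/
def MuForm.NormalForm (φ : MuForm P) : Prop :=
  (∀ (p : P) (χ₁ χ₂ : MuForm P), χ₁ ∈ φ.subformulas → χ₂ ∈ φ.subformulas →
      (∃ ψ, χ₁ = MuForm.mu p ψ ∨ χ₁ = MuForm.nu p ψ) →
      (∃ ψ, χ₂ = MuForm.mu p ψ ∨ χ₂ = MuForm.nu p ψ) → χ₁ = χ₂) ∧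
    ∀ p ∈ φ.freeVars, ¬ MuForm.BoundIn p φ

/-- The vertices `(ψ, s)` of the model-checking game for `φ` that belong to
Player `0`: `ψ` is `⊥`, a disjunction, a `◇`-formula, a `μ`- or `ν`-formula, a
variable bound in `φ`, a variable `p` free in `φ` with `s ∉ κ p`, or a literal
`¬p` with `s ∈ κ p`. -/
def mcPlayer0 (φ : MuForm P) (κ : P → Set S) : MuForm P × S → Prop :=
  fun v => match v.1 with
  | .bot => True
  | .top => False
  | .var p => MuForm.BoundIn p φ ∨ (p ∈ φ.freeVars ∧ v.2 ∉ κ p)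
  | .nvar p => v.2 ∈ κ p
  | .and _ _ => False
  | .or _ _ => True
  | .box _ => False
  | .dia _ => True
  | .mu _ _ => True
  | .nu _ _ => True

/-- The edges of the model-checking game for `φ`: from `(ψ₁∧ψ₂, s)` and
`(ψ₁∨ψ₂, s)` to `(ψ₁, s)` and `(ψ₂, s)`; from `(□ψ, s)` and `(◇ψ, s)` to
`(ψ, s')` for every `s'` with `R s s'`; from `(μp.ψ, s)` and `(νp.ψ, s)` to
`(ψ, s)`; from `(p, s)` to `(φ_p, s)` where `φ_p` is the fixpoint subformula of
`φ` binding `p`; no edges from `(⊥, s)`, `(⊤, s)`, `(¬p, s)`, or `(p, s)` with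
`p` free in `φ`. -/
def mcEdge (R : S → S → Prop) (φ : MuForm P) :
    MuForm P × S → MuForm P × S → Prop :=
  fun v w => match v.1 with
  | .bot => False
  | .top => False
  | .var p => w.2 = v.2 ∧ w.1 ∈ φ.subformulas ∧
      ∃ ψ, w.1 = MuForm.mu p ψ ∨ w.1 = MuForm.nu p ψ
  | .nvar _ => False
  | .and ψ₁ ψ₂ => w.2 = v.2 ∧ (w.1 = ψ₁ ∨ w.1 = ψ₂)
  | .or ψ₁ ψ₂ => w.2 = v.2 ∧ (w.1 = ψ₁ ∨ w.1 = ψ₂)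
  | .box ψ => w.1 = ψ ∧ R v.2 w.2
  | .dia ψ => w.1 = ψ ∧ R v.2 w.2
  | .mu _ ψ => w.2 = v.2 ∧ w.1 = ψ
  | .nu _ ψ => w.2 = v.2 ∧ w.1 = ψ

/-- The priority of a vertex `(ψ, s)` of the model-checking game:
`2⌈α(ψ)/2⌉ − 1` if `ψ` is a `μ`-formula with `α(ψ) > 0`, `2⌊α(ψ)/2⌋` if `ψ` is
a `ν`-formula with `α(ψ) > 0`, and `0` otherwise. -/
noncomputable def mcPrio : MuForm P → ℕ
  | .mu p ψ => if 0 < (MuForm.mu p ψ).alt then 2 * (((MuForm.mu p ψ).alt + 1) / 2) - 1 else 0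
  | .nu p ψ => if 0 < (MuForm.nu p ψ).alt then 2 * ((MuForm.nu p ψ).alt / 2) else 0
  | _ => 0

open Classical in
/-- The model-checking parity game `G(φ)` for a μ-calculus formula `φ` (in
normal form), a Kripke structure with transition relation `R`, and a valuation
`κ`: its vertices are the pairs `(ψ, s)` with `ψ` a subformula of `φ` and `s`
a state. -/
noncomputable def mcGame (R : S → S → Prop) (φ : MuForm P) (κ : P → Set S) :
    ParityGame ({ψ : MuForm P // ψ ∈ φ.subformulas} × S) where
  owner := fun v => if mcPlayer0 φ κ (v.1.1, v.2) then 0 else 1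
  E := fun v w => mcEdge R φ (v.1.1, v.2) (w.1.1, w.2)
  prio := fun v => mcPrio v.1.1
  finRange := by
    have h : (Set.range fun ψ : {ψ : MuForm P // ψ ∈ φ.subformulas} =>
        mcPrio ψ.1).Finite := Set.finite_range _
    exact h.subset (by rintro _ ⟨v, rfl⟩; exact ⟨v.1, rfl⟩)

/-!
The root `(□ψ, s)` of `G(□ψ)` belongs to Player 1, so Player 0 wins there iff she wins from each
of its successors, which are the vertices `(ψ, s')` with `R s s'`. Below the root, `G(□ψ)` is a
copy of `G(ψ)`: the vertices `(χ, t)` with `χ` a subformula of `ψ` are closed under moves and carry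
the same owners, priorities and moves as in `G(ψ)`. Strategies transfer along such an embedding
in both directions, by mapping histories forward and pulling moves back.
-/

namespace ParityGame

variable {V : Type*} {G : ParityGame V}

structure Player0Turn (G : ParityGame V) (l : List V) (x : V) : Prop where
  chain : l.IsChain G.E
  getLast?_eq : l.getLast? = some x
  owner_eq : G.owner x = 0
  not_deadEnd : ¬ G.DeadEnd x

theorem ValidStrat.E {σ : List V → V} (hσ : G.ValidStrat σ) {l : List V} {x : V}
    (h : G.Player0Turn l x) : G.E x (σ l) :=
  hσ l x h.chain h.getLast?_eq h.owner_eq h.not_deadEnd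

theorem not_deadEnd_of_E {v w : V} (h : G.E v w) : ¬ G.DeadEnd v := fun hd => hd w h

-- Used to complete partial strategies to valid ones.
open Classical in
noncomputable def someMove (G : ParityGame V) (d : V) (l : List V) : V :=
  if h : ∃ w, ∃ x ∈ l.getLast?, G.E x w then h.choose else d

theorem validStrat_someMove (d : V) : G.ValidStrat (G.someMove d) := by
  intro l x _ hx _ hnd
  have h : ∃ w, ∃ x ∈ l.getLast?, G.E x w := by
    by_contra! h
    exact hnd fun w => h w x hx
  obtain ⟨x', hx', hE⟩ := h.choose_spec
  rw [someMove, dif_pos h]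
  rwa [← Option.some_inj.mp (hx.symm.trans hx')] at hE

theorem InfPlay.player0Turn_ofFn {π : ℕ → V} (hπ : G.InfPlay π) {i : ℕ}
    (ho : G.owner (π i) = 0) : G.Player0Turn (List.ofFn fun j : Fin (i + 1) => π j) (π i) where
  chain := List.isChain_iff_getElem.mpr fun j _ => by simpa only [List.getElem_ofFn] using hπ j
  getLast?_eq := by simp [List.getLast?_eq_getElem?, -List.ofFn_succ]
  owner_eq := ho
  not_deadEnd := not_deadEnd_of_E (hπ i)

theorem player0Turn_take {l : List V} (hl : l.IsChain G.E) {i : ℕ} (hi : i + 1 < l.length)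
    (ho : G.owner l[i] = 0) : G.Player0Turn (l.take (i + 1)) l[i] where
  chain := List.IsChain.take hl _
  getLast?_eq := by simp [List.getLast?_take]
  owner_eq := ho
  not_deadEnd := not_deadEnd_of_E (List.isChain_iff_getElem.mp hl i hi)

theorem infPlay_cons_iff {r : V} {π : ℕ → V} :
    G.InfPlay (Stream'.cons r π) ↔ G.E r (π 0) ∧ G.InfPlay π :=
  ⟨fun h => ⟨h 0, fun i => h (i + 1)⟩, fun ⟨h₀, h⟩ i => by cases i; exacts [h₀, h _]⟩

theorem infOften_cons {r : V} {π : ℕ → V} : G.InfOften (Stream'.cons r π) = G.InfOften π := by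
  ext c
  refine ⟨fun h N => ?_, fun h N => ?_⟩
  · obtain ⟨_ | n, hn, hc⟩ := h (N + 1)
    · omega
    · exact ⟨n, by omega, hc⟩
  · obtain ⟨n, hn, hc⟩ := h N
    exact ⟨n + 1, by omega, hc⟩

theorem winInf_cons_iff {r : V} {π : ℕ → V} : G.WinInf (Stream'.cons r π) ↔ G.WinInf π := by
  simp only [WinInf, infOften_cons]

theorem conformsInf_cons_iff {r : V} (hr : G.owner r = 1) {π : ℕ → V} {σ σ' : List V → V}
    (hσ : ∀ l, l.head? = some (π 0) → σ (r :: l) = σ' l) :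
    G.ConformsInf σ (Stream'.cons r π) ↔ G.ConformsInf σ' π := by
  have hpre (i : ℕ) : (List.ofFn fun j : Fin (i + 2) => Stream'.cons r π j) =
      r :: List.ofFn fun j : Fin (i + 1) => π j := List.ofFn_succ
  refine ⟨fun h i ho => ?_, fun h i ho => ?_⟩
  · rw [← hσ _ (by simp), ← hpre]
    exact h (i + 1) ho
  · cases i with
    | zero => exact absurd (hr ▸ ho) (by decide)
    | succ i =>
      show π (i + 1) = _
      rw [hpre, hσ _ (by simp)]
      exact h i ho

theorem FinPlay.eq_cons {v : V} {l : List V} (h : G.FinPlay v l) : ∃ t, l = v :: t := by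
  obtain ⟨hhead, -⟩ := h
  cases l with
  | nil => simp at hhead
  | cons u t => exact ⟨t, by simpa using hhead⟩

theorem finPlay_cons_cons_iff {r w : V} {t : List V} :
    G.FinPlay r (r :: w :: t) ↔ G.E r w ∧ G.FinPlay w (w :: t) := by
  simp [FinPlay, List.Chain', List.isChain_cons_cons, and_assoc]

theorem winFin_cons_cons_iff {r w : V} {t : List V} :
    G.WinFin (r :: w :: t) ↔ G.WinFin (w :: t) := by
  rw [WinFin, WinFin, List.getLast?_cons_cons]

theorem conformsFin_cons_iff {r w : V} (hr : G.owner r = 1) {t : List V} {σ σ' : List V → V}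
    (hσ : ∀ l, l.head? = some w → σ (r :: l) = σ' l) :
    G.ConformsFin σ (r :: w :: t) ↔ G.ConformsFin σ' (w :: t) := by
  refine ⟨fun h i hi ho => ?_, fun h i hi ho => ?_⟩
  · have := h (i + 1) (by simpa using hi) ho
    simp only [List.get_eq_getElem, List.getElem_cons_succ, List.take_succ_cons] at this ⊢
    rw [this, hσ _ (by simp)]
  · cases i with
    | zero => exact absurd (hr ▸ ho) (by decide)
    | succ i =>
      simp only [List.get_eq_getElem, List.getElem_cons_succ, List.take_succ_cons] at ho ⊢
      rw [hσ _ (by simp)]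
      exact h i (by simpa using hi) ho

theorem Wins0.of_E_of_owner_eq_one {r w : V} (hr : G.owner r = 1) (h : G.Wins0 r)
    (hw : G.E r w) : G.Wins0 w := by
  classical
  obtain ⟨σ, hσ, hinf, hfin⟩ := h
  -- the guard keeps `r :: l` a path whenever `l` is one
  let σ' : List V → V := fun l => if ∀ u ∈ l.head?, G.E r u then σ (r :: l) else G.someMove w l
  have hσ' (l : List V) (hl : l.head? = some w) : σ (r :: l) = σ' l := by simp [σ', hl, hw]
  refine ⟨σ', fun l x hl hx ho hnd => ?_, fun π hπ0 hπ hconf => ?_, fun l hl hconf => ?_⟩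
  · by_cases hc : ∀ u ∈ l.head?, G.E r u
    · simp only [σ', if_pos hc]
      exact hσ (r :: l) x (List.isChain_cons.mpr ⟨hc, hl⟩) (by simp [List.getLast?_cons, hx]) ho hnd
    · simp only [σ', if_neg hc]
      exact validStrat_someMove w l x hl hx ho hnd
  · subst hπ0
    exact winInf_cons_iff.mp <| hinf _ rfl (infPlay_cons_iff.mpr ⟨hw, hπ⟩)
      ((conformsInf_cons_iff hr hσ').mpr hconf)
  · obtain ⟨t, rfl⟩ := hl.eq_cons
    exact winFin_cons_cons_iff.mp <| hfin _ (finPlay_cons_cons_iff.mpr ⟨hw, hl⟩)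
      ((conformsFin_cons_iff hr hσ').mpr hconf)

theorem Wins0.of_owner_eq_one {r : V} (hr : G.owner r = 1) (h : ∀ w, G.E r w → G.Wins0 w) :
    G.Wins0 r := by
  classical
  have (w : V) : ∃ σ, G.ValidStrat σ ∧ (G.E r w → G.WinningFrom σ w) :=
    if hw : G.E r w then (h w hw).imp fun σ hσ => ⟨hσ.1, fun _ => hσ⟩
    else ⟨G.someMove r, validStrat_someMove r, fun h => absurd h hw⟩
  choose σw hσw using this
  let σ : List V → V := fun
    | _ :: w :: t => σw w (w :: t)
    | l => G.someMove r l
  have hσ (w : V) (l : List V) (hl : l.head? = some w) : σ (r :: l) = σw w l := by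
    obtain ⟨t, rfl⟩ := List.head?_eq_some_iff.mp hl
    rfl
  refine ⟨σ, fun l x hl hx ho hnd => ?_, fun π hπ0 hπ hconf => ?_, fun l hl hconf => ?_⟩
  · match l, hl, hx with
    | [v], hl, hx => exact validStrat_someMove r _ x hl hx ho hnd
    | v :: w :: t, hl, hx => exact (hσw w).1 (w :: t) x hl.tail (by simpa using hx) ho hnd
  · have hcons : Stream'.cons r (fun n => π (n + 1)) = π :=
      funext fun n => by cases n; exacts [hπ0.symm, rfl]
    rw [← hcons] at hπ hconf ⊢
    obtain ⟨hE, hπ'⟩ := infPlay_cons_iff.mp hπ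
    exact winInf_cons_iff.mpr <| ((hσw _).2 hE).2.1 _ rfl hπ'
      ((conformsInf_cons_iff hr (hσ _)).mp hconf)
  · obtain ⟨_ | ⟨w, t⟩, rfl⟩ := hl.eq_cons
    · simpa [WinFin] using hr
    · obtain ⟨hE, hl'⟩ := finPlay_cons_cons_iff.mp hl
      exact winFin_cons_cons_iff.mpr <| ((hσw w).2 hE).2.2 _ hl'
        ((conformsFin_cons_iff hr (hσ w)).mp hconf)

theorem wins0_iff_forall_E_of_owner_eq_one {r : V} (hr : G.owner r = 1) :
    G.Wins0 r ↔ ∀ w, G.E r w → G.Wins0 w :=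
  ⟨fun h _ => h.of_E_of_owner_eq_one hr, Wins0.of_owner_eq_one hr⟩

variable {W : Type*}

/-- A copy of `G` inside `H` that no move of `H` leaves. -/
structure Embedding (G : ParityGame V) (H : ParityGame W) where
  toFun : V → W
  injective : Function.Injective toFun
  owner_apply (v : V) : H.owner (toFun v) = G.owner v
  prio_apply (v : V) : H.prio (toFun v) = G.prio v
  E_apply_iff (v w : V) : H.E (toFun v) (toFun w) ↔ G.E v w
  exists_apply_eq_of_E {v : V} {w' : W} : H.E (toFun v) w' → ∃ w, toFun w = w'

instance {H : ParityGame W} : CoeFun (G.Embedding H) fun _ => V → W := ⟨Embedding.toFun⟩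

namespace Embedding

variable {H : ParityGame W} (e : G.Embedding H)

theorem deadEnd_apply_iff {v : V} : H.DeadEnd (e v) ↔ G.DeadEnd v := by
  refine ⟨fun h w hw => h (e w) ((e.E_apply_iff v w).mpr hw), fun h w' hw' => ?_⟩
  obtain ⟨w, rfl⟩ := e.exists_apply_eq_of_E hw'
  exact h w ((e.E_apply_iff v w).mp hw')

theorem isChain_map_iff {l : List V} : (l.map e).IsChain H.E ↔ l.IsChain G.E := by
  simp only [List.isChain_map, e.E_apply_iff]

theorem player0Turn_map_iff {l : List V} {x : V} :
    H.Player0Turn (l.map e) (e x) ↔ G.Player0Turn l x := by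
  refine ⟨fun ⟨h₁, h₂, h₃, h₄⟩ => ⟨?_, ?_, ?_, ?_⟩, fun ⟨h₁, h₂, h₃, h₄⟩ => ⟨?_, ?_, ?_, ?_⟩⟩
  · exact e.isChain_map_iff.mp h₁
  · simpa [List.getLast?_map, e.injective.eq_iff] using h₂
  · rwa [e.owner_apply] at h₃
  · rwa [e.deadEnd_apply_iff] at h₄
  · exact e.isChain_map_iff.mpr h₁
  · simp [List.getLast?_map, h₂]
  · rwa [e.owner_apply]
  · rwa [e.deadEnd_apply_iff]

theorem infPlay_comp_iff {π : ℕ → V} : H.InfPlay (e ∘ π) ↔ G.InfPlay π :=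
  forall_congr' fun i => e.E_apply_iff (π i) (π (i + 1))

theorem winInf_comp_iff {π : ℕ → V} : H.WinInf (e ∘ π) ↔ G.WinInf π := by
  simp only [WinInf, InfOften, Function.comp_apply, e.prio_apply]

theorem finPlay_map_iff {v : V} {l : List V} : H.FinPlay (e v) (l.map e) ↔ G.FinPlay v l := by
  simp only [FinPlay, List.Chain', List.head?_map, List.getLast?_map, Option.map_eq_some_iff,
    e.injective.eq_iff, exists_eq_right, e.isChain_map_iff, Option.mem_def, forall_exists_index,
    and_imp, forall_apply_eq_imp_iff₂, e.deadEnd_apply_iff]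

theorem winFin_map_iff {l : List V} : H.WinFin (l.map e) ↔ G.WinFin l := by
  simp only [WinFin, List.getLast?_map, Option.mem_def, Option.map_eq_some_iff,
    forall_exists_index, and_imp, forall_apply_eq_imp_iff₂, e.owner_apply]

theorem exists_comp_eq_of_infPlay {v : V} {π' : ℕ → W} (hπ' : H.InfPlay π') (h₀ : π' 0 = e v) :
    ∃ π : ℕ → V, π 0 = v ∧ π' = e ∘ π := by
  have hrange (n : ℕ) : ∃ w, e w = π' n := by
    induction n with
    | zero => exact ⟨v, h₀.symm⟩
    | succ n ih =>
      obtain ⟨w, hw⟩ := ih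
      exact e.exists_apply_eq_of_E (hw ▸ hπ' n)
  choose π hπ using hrange
  exact ⟨π, e.injective ((hπ 0).trans h₀), funext fun n => (hπ n).symm⟩

theorem exists_map_eq_of_isChain {v : V} {t' : List W} (h : (e v :: t').IsChain H.E) :
    ∃ t : List V, t' = t.map e := by
  induction t' generalizing v with
  | nil => exact ⟨[], rfl⟩
  | cons w' t' ih =>
    obtain ⟨hE, h⟩ := List.isChain_cons_cons.mp h
    obtain ⟨w, rfl⟩ := e.exists_apply_eq_of_E hE
    obtain ⟨t, rfl⟩ := ih h
    exact ⟨w :: t, rfl⟩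

theorem exists_map_eq_of_finPlay {v : V} {l' : List W} (h : H.FinPlay (e v) l') :
    ∃ l : List V, l' = l.map e := by
  obtain ⟨t', rfl⟩ := h.eq_cons
  obtain ⟨t, rfl⟩ := e.exists_map_eq_of_isChain h.2.1
  exact ⟨v :: t, rfl⟩

variable {σ : List V → V} {τ : List W → W}

theorem conformsInf_comp_iff (hστ : ∀ l x, G.Player0Turn l x → τ (l.map e) = e (σ l))
    {π : ℕ → V} (hπ : G.InfPlay π) : H.ConformsInf τ (e ∘ π) ↔ G.ConformsInf σ π := by
  refine forall_congr' fun i => ?_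
  rw [Function.comp_apply, e.owner_apply]
  refine imp_congr_right fun ho => ?_
  have hpre : (List.ofFn fun j : Fin (i + 1) => (e ∘ π) j) =
      (List.ofFn fun j : Fin (i + 1) => π j).map e := List.map_ofFn.symm
  rw [hpre, hστ _ _ (hπ.player0Turn_ofFn ho)]
  exact e.injective.eq_iff

theorem conformsFin_map_iff (hστ : ∀ l x, G.Player0Turn l x → τ (l.map e) = e (σ l))
    {l : List V} (hl : l.IsChain G.E) : H.ConformsFin τ (l.map e) ↔ G.ConformsFin σ l := by
  have hstep (i : ℕ) (hi : i + 1 < l.length) (ho : G.owner l[i] = 0) :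
      τ ((l.map e).take (i + 1)) = e (σ (l.take (i + 1))) := by
    rw [← List.map_take, hστ _ _ (player0Turn_take hl hi ho)]
  refine ⟨fun h i hi ho => ?_, fun h i hi ho => ?_⟩
  · have := h i (by simpa using hi) (by simpa [e.owner_apply] using ho)
    simp only [List.get_eq_getElem, List.getElem_map, hstep i hi ho] at this ⊢
    exact e.injective this
  · simp only [List.get_eq_getElem, List.getElem_map, e.owner_apply, List.length_map] at hi ho ⊢
    rw [hstep i hi ho]
    exact congrArg e (h i hi ho)

theorem wins0_apply {v : V} (h : G.Wins0 v) : H.Wins0 (e v) := by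
  classical
  obtain ⟨σ, hσ, hinf, hfin⟩ := h
  let τ : List W → W := fun l' =>
    if h : ∃ l : List V, l.map e = l' then e (σ h.choose) else H.someMove (e v) l'
  have hτ (l : List V) : τ (l.map e) = e (σ l) := by
    have h : ∃ l' : List V, l'.map e = l.map e := ⟨l, rfl⟩
    simp only [τ, dif_pos h, (List.map_injective_iff.mpr e.injective) h.choose_spec]
  refine ⟨τ, fun l' x' hl' hx' ho hnd => ?_, fun π' hπ'₀ hπ' hconf => ?_, fun l' hl' hconf => ?_⟩
  · by_cases hex : ∃ l : List V, l.map e = l'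
    · obtain ⟨l, rfl⟩ := hex
      obtain ⟨x, -, rfl⟩ := Option.map_eq_some_iff.mp (List.getLast?_map ▸ hx')
      rw [hτ, e.E_apply_iff]
      exact hσ.E (e.player0Turn_map_iff.mp ⟨hl', hx', ho, hnd⟩)
    · simp only [τ, dif_neg hex]
      exact validStrat_someMove _ l' x' hl' hx' ho hnd
  · obtain ⟨π, hπ₀, rfl⟩ := e.exists_comp_eq_of_infPlay hπ' hπ'₀
    have hπ := e.infPlay_comp_iff.mp hπ'
    exact e.winInf_comp_iff.mpr <|
      hinf π hπ₀ hπ ((e.conformsInf_comp_iff (fun l _ _ => hτ l) hπ).mp hconf)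
  · obtain ⟨l, rfl⟩ := e.exists_map_eq_of_finPlay hl'
    have hl := e.finPlay_map_iff.mp hl'
    exact e.winFin_map_iff.mpr <|
      hfin l hl ((e.conformsFin_map_iff (fun l _ _ => hτ l) hl.2.1).mp hconf)

theorem wins0_of_apply {v : V} (h : H.Wins0 (e v)) : G.Wins0 v := by
  classical
  obtain ⟨τ, hτ, hinf, hfin⟩ := h
  let σ : List V → V := fun l =>
    if h : ∃ w, e w = τ (l.map e) then h.choose else G.someMove v l
  have hσ (l : List V) (x : V) (hl : G.Player0Turn l x) :
      τ (l.map e) = e (σ l) ∧ G.E x (σ l) := by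
    have hE := hτ.E (e.player0Turn_map_iff.mpr hl)
    have h : ∃ w, e w = τ (l.map e) := e.exists_apply_eq_of_E hE
    simp only [σ, dif_pos h]
    rw [← h.choose_spec, e.E_apply_iff] at hE
    exact ⟨h.choose_spec.symm, hE⟩
  refine ⟨σ, fun l x hl hx ho hnd => (hσ l x ⟨hl, hx, ho, hnd⟩).2,
    fun π hπ₀ hπ hconf => ?_, fun l hl hconf => ?_⟩
  · exact e.winInf_comp_iff.mp <| hinf (e ∘ π) (congrArg e hπ₀) (e.infPlay_comp_iff.mpr hπ)
      ((e.conformsInf_comp_iff (fun l x h => (hσ l x h).1) hπ).mpr hconf)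
  · exact e.winFin_map_iff.mp <| hfin _ (e.finPlay_map_iff.mpr hl)
      ((e.conformsFin_map_iff (fun l x h => (hσ l x h).1) hl.2.1).mpr hconf)

theorem wins0_apply_iff {v : V} : H.Wins0 (e v) ↔ G.Wins0 v :=
  ⟨e.wins0_of_apply, e.wins0_apply⟩

end Embedding

end ParityGame

namespace MuForm

theorem subformulas_subset_of_mem {φ χ : MuForm P} (h : χ ∈ φ.subformulas) :
    χ.subformulas ⊆ φ.subformulas := by
  induction φ with
  | and φ₁ φ₂ ih₁ ih₂ | or φ₁ φ₂ ih₁ ih₂ =>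
    simp only [subformulas, Finset.mem_insert, Finset.mem_union] at h
    rcases h with rfl | h | h
    · rfl
    · exact (ih₁ h).trans (Finset.subset_union_left.trans (Finset.subset_insert _ _))
    · exact (ih₂ h).trans (Finset.subset_union_right.trans (Finset.subset_insert _ _))
  | box φ ih | dia φ ih | mu _ φ ih | nu _ φ ih =>
    rcases Finset.mem_insert.mp h with rfl | h
    · rfl
    · exact (ih h).trans (Finset.subset_insert _ _)
  | _ => rw [Finset.mem_singleton.mp h]

theorem mem_subformulas_of_mcEdge {R : S → S → Prop} {ψ χ : MuForm P} (hχ : χ ∈ ψ.subformulas)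
    {t : S} {w : MuForm P × S} (h : mcEdge R (box ψ) (χ, t) w) : w.1 ∈ ψ.subformulas := by
  obtain ⟨χ', t'⟩ := w
  have hsub := subformulas_subset_of_mem hχ
  cases χ with
  | var p =>
    obtain ⟨-, hmem, _, hfix⟩ := h
    rcases Finset.mem_insert.mp hmem with rfl | hmem
    · rcases hfix with h | h <;> cases h
    · exact hmem
  | and χ₁ χ₂ | or χ₁ χ₂ =>
    obtain ⟨-, rfl | rfl⟩ := h <;> exact hsub (by simp [subformulas, self_mem_subformulas])
  | box χ | dia χ =>
    obtain ⟨rfl, -⟩ := h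
    exact hsub (by simp [subformulas, self_mem_subformulas])
  | mu _ χ | nu _ χ =>
    obtain ⟨-, rfl⟩ := h
    exact hsub (by simp [subformulas, self_mem_subformulas])
  | _ => exact h.elim

end MuForm

open MuForm

theorem mcPlayer0_box_iff (ψ : MuForm P) (κ : P → Set S) (v : MuForm P × S) :
    mcPlayer0 (box ψ) κ v ↔ mcPlayer0 ψ κ v := by
  obtain ⟨χ, t⟩ := v
  cases χ <;> simp [mcPlayer0, freeVars, BoundIn, subformulas]

theorem mcEdge_box_iff (R : S → S → Prop) {ψ : MuForm P} (v : MuForm P × S) {w : MuForm P × S}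
    (hw : w.1 ∈ ψ.subformulas) : mcEdge R (box ψ) v w ↔ mcEdge R ψ v w := by
  obtain ⟨χ, t⟩ := v
  cases χ <;> simp [mcEdge, subformulas, hw]

def mcGameBoxEmbedding (R : S → S → Prop) (ψ : MuForm P) (κ : P → Set S) :
    (mcGame R ψ κ).Embedding (mcGame R (box ψ) κ) where
  toFun v := (⟨v.1.1, Finset.mem_insert_of_mem v.1.2⟩, v.2)
  injective _ _ h := by simpa only [Prod.ext_iff, Subtype.ext_iff] using h
  owner_apply _ := by classical exact if_congr (mcPlayer0_box_iff ψ κ _) rfl rfl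
  prio_apply _ := rfl
  E_apply_iff v w := mcEdge_box_iff R _ w.1.2
  exists_apply_eq_of_E {v w'} h := ⟨(⟨w'.1.1, mem_subformulas_of_mcEdge v.1.2 h⟩, w'.2), rfl⟩

theorem mcGame_box_wins_iff_general (R : S → S → Prop) (ψ : MuForm P)
    (κ : P → Set S) (s : S) :
    (mcGame R (MuForm.box ψ) κ).Wins0
        (⟨MuForm.box ψ, (MuForm.box ψ).self_mem_subformulas⟩, s) ↔
      ∀ s' : S, R s s' →
        (mcGame R ψ κ).Wins0 (⟨ψ, ψ.self_mem_subformulas⟩, s') := by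
  have hroot : (mcGame R (box ψ) κ).owner (⟨box ψ, (box ψ).self_mem_subformulas⟩, s) = 1 := by
    simp [mcGame, mcPlayer0]
  rw [ParityGame.wins0_iff_forall_E_of_owner_eq_one hroot]
  refine ⟨fun h s' hs' => ?_, fun h w hw => ?_⟩
  · exact (mcGameBoxEmbedding R ψ κ).wins0_apply_iff.mp (h _ ⟨rfl, hs'⟩)
  · obtain ⟨⟨χ, hχ⟩, s'⟩ := w
    obtain ⟨hχψ, hs'⟩ : χ = ψ ∧ R s s' := hw
    subst χ
    exact (mcGameBoxEmbedding R ψ κ).wins0_apply_iff.mpr (h s' hs')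

/-- Player `0` wins the model-checking game `G(□ψ)` from `(□ψ, s)` iff for
every `s'` with `R s s'`, Player `0` wins `G(ψ)` from `(ψ, s')`. -/
theorem mcGame_box_wins_iff (R : S → S → Prop) (ψ : MuForm P)
    (hnf : (MuForm.box ψ).NormalForm) (κ : P → Set S) (s : S) :
    (mcGame R (MuForm.box ψ) κ).Wins0
        (⟨MuForm.box ψ, (MuForm.box ψ).self_mem_subformulas⟩, s) ↔
      ∀ s' : S, R s s' →
        (mcGame R ψ κ).Wins0 (⟨ψ, ψ.self_mem_subformulas⟩, s') :=
  mcGame_box_wins_iff_general R ψ κ s
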